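/- Generation lemma for applications: for any context Γ, terms t, u, and type T, if Γ ⊢ t u : T is derivable in Add, then there exist integers n, m ≥ 1, types T₁,…,Tₙ, a unit type U, type variables X⃗ and vectors of unit types V⃗₁,…,V⃗ₘ such that Γ ⊢ t : Σ_{i=1}^{n} ∀X⃗.(U→T_i) and Γ ⊢ u : Σ_{j=1}^{m} U[V⃗_j/X⃗] are derivable in Add, and Σ_{i=1}^{n}Σ_{j=1}^{m} T_i[V⃗_j/X⃗] ≼ T. -/

import Mathlib

set_option maxHeartbeats 1000000

/-! ## Terms of the non-deterministic call-by-value λ-calculus (de Bruijn indices) -/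

inductive Tm : Type
  | var : ℕ → Tm
  | lam : Tm → Tm
  | app : Tm → Tm → Tm
  | add : Tm → Tm → Tm
  | zero : Tm
  deriving DecidableEq

namespace Tm

/-- Values: variables and abstractions. -/
inductive IsValue : Tm → Prop
  | var (n : ℕ) : IsValue (var n)
  | lam (t : Tm) : IsValue (lam t)

/-- de Bruijn shifting: add `d` to every variable index `≥ c`. -/
def shift (d c : ℕ) : Tm → Tm
  | var n => if n < c then var n else var (n + d)
  | lam t => lam (shift d (c + 1) t)
  | app t u => app (shift d c t) (shift d c u)
  | add t u => add (shift d c t) (shift d c u)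
  | zero => zero

/-- Capture-avoiding substitution of the variable `k` by `v` (removing the binder). -/
def subst (k : ℕ) (v : Tm) : Tm → Tm
  | var n => if n = k then shift k 0 v else if k < n then var (n - 1) else var n
  | lam t => lam (subst (k + 1) v t)
  | app t u => app (subst k v t) (subst k v u)
  | add t u => add (subst k v t) (subst k v u)
  | zero => zero

/-- `ClosedUnder k t`: every free variable of `t` has index `< k`. -/
def ClosedUnder (k : ℕ) : Tm → Prop
  | var n => n < k
  | lam t => ClosedUnder (k + 1) t
  | app t u => ClosedUnder k t ∧ ClosedUnder k u
  | add t u => ClosedUnder k t ∧ ClosedUnder k u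
  | zero => True

/-- Closed terms. -/
def Closed (t : Tm) : Prop := ClosedUnder 0 t

end Tm

open Tm

/-- The AC-equivalence on terms: the least congruence making `+`
associative and commutative (terms are considered modulo `Aeq`). -/
inductive Aeq : Tm → Tm → Prop
  | refl (t : Tm) : Aeq t t
  | symm : Aeq t u → Aeq u t
  | trans : Aeq t u → Aeq u s → Aeq t s
  | comm (t u : Tm) : Aeq (.add t u) (.add u t)
  | assoc (t u s : Tm) : Aeq (.add t (.add u s)) (.add (.add t u) s)
  | lamCongr : Aeq t t' → Aeq (.lam t) (.lam t')
  | appCongr : Aeq t t' → Aeq u u' → Aeq (.app t u) (.app t' u')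
  | addCongr : Aeq t t' → Aeq u u' → Aeq (.add t u) (.add t' u')

/-- One-step reduction (the five rewrite rules plus β, closed under all
contexts, and performed modulo the AC-equivalence of terms). -/
inductive Step : Tm → Tm → Prop
  | distrRight (t u s : Tm) : Step (.app (.add t u) s) (.add (.app t s) (.app u s))
  | distrLeft (t u s : Tm) : Step (.app t (.add u s)) (.add (.app t u) (.app t s))
  | zeroApp (t : Tm) : Step (.app .zero t) .zero
  | appZero (t : Tm) : Step (.app t .zero) .zero
  | addZero (t : Tm) : Step (.add t .zero) t
  | beta (t v : Tm) : IsValue v → Step (.app (.lam t) v) (Tm.subst 0 v t)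
  | appLeft : Step t t' → Step (.app t u) (.app t' u)
  | appRight : Step u u' → Step (.app t u) (.app t u')
  | addLeft : Step t t' → Step (.add t u) (.add t' u)
  | addRight : Step u u' → Step (.add t u) (.add t u')
  | lamCongr : Step t t' → Step (.lam t) (.lam t')
  | ac : Aeq t t' → Step t' u' → Aeq u' u → Step t u

/-- Strong normalisation of a term: accessibility of the inverse reduction. -/
def SN (t : Tm) : Prop := Acc (fun a b => Step b a) t

/-- The set of strongly normalising closed terms. -/
def SNset : Set Tm := {t | Closed t ∧ SN t}

/-- Pseudo-values: abstractions and sums of pseudo-values. -/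
inductive PseudoValue : Tm → Prop
  | lam (t : Tm) : PseudoValue (.lam t)
  | add : PseudoValue t → PseudoValue u → PseudoValue (.add t u)

/-- Neutral terms: closed terms that are not pseudo-values. -/
def Neutral (t : Tm) : Prop := Closed t ∧ ¬ PseudoValue t

/-- The set of one-step reducts of `t`. -/
def Red (t : Tm) : Set Tm := {u | Step t u}

/-- The set of reducts (in any number of steps, including zero) of terms of `S`. -/
def RedStar (S : Set Tm) : Set Tm := {u | ∃ t ∈ S, Relation.ReflTransGen Step t u}

/-- The closure of a set of terms under (CR3). -/
inductive Clo (S : Set Tm) : Tm → Prop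
  | base {t : Tm} : t ∈ S → Clo S t
  | step {t : Tm} : Neutral t → (∀ u, Step t u → Clo S u) → Clo S t

/-- `clo S`: the least set containing `S` and closed under (CR3). -/
def clo (S : Set Tm) : Set Tm := {t | Clo S t}

/-- Reducibility candidates. -/
structure IsCandidate (A : Set Tm) : Prop where
  cr1 : A ⊆ SNset
  cr2 : ∀ t ∈ A, Red t ⊆ A
  cr3 : ∀ t, Neutral t → Red t ⊆ A → t ∈ A

/-- The arrow operator on sets of closed terms. -/
def CArrow (A B : Set Tm) : Set Tm := {t | Closed t ∧ ∀ u ∈ A, Tm.app t u ∈ B}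

/-- The sum of two sets of (AC-classes of) terms. -/
def CSum (A B : Set Tm) : Set Tm := {s | ∃ t ∈ A, ∃ u ∈ B, Aeq s (Tm.add t u)}

/-- The ⊞ operator on reducibility candidates. -/
def CPlus (A B : Set Tm) : Set Tm := clo (CSum A B ∪ A ∪ B)

/-! ## Types of the Add type system -/

mutual
  /-- Unit types. -/
  inductive UTy : Type
    | var : ℕ → UTy
    | arrow : UTy → Ty → UTy
    | all : UTy → UTy

  /-- Types. -/
  inductive Ty : Type
    | unit : UTy → Ty
    | add : Ty → Ty → Ty
    | zero : Ty
end

mutual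
  /-- Shifting of type variables in unit types. -/
  def UTy.shift (d c : ℕ) : UTy → UTy
    | .var n => if n < c then .var n else .var (n + d)
    | .arrow U T => .arrow (UTy.shift d c U) (Ty.shift d c T)
    | .all U => .all (UTy.shift d (c + 1) U)

  /-- Shifting of type variables in types. -/
  def Ty.shift (d c : ℕ) : Ty → Ty
    | .unit U => .unit (UTy.shift d c U)
    | .add T R => .add (Ty.shift d c T) (Ty.shift d c R)
    | .zero => .zero
end

mutual
  /-- Substitution of the (bound) type variable `k` by `V` in a unit type. -/
  def UTy.subst (k : ℕ) (V : UTy) : UTy → UTy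
    | .var n => if n = k then UTy.shift k 0 V else if k < n then .var (n - 1) else .var n
    | .arrow U T => .arrow (UTy.subst k V U) (Ty.subst k V T)
    | .all U => .all (UTy.subst (k + 1) V U)

  /-- Substitution of the (bound) type variable `k` by `V` in a type. -/
  def Ty.subst (k : ℕ) (V : UTy) : Ty → Ty
    | .unit U => .unit (UTy.subst k V U)
    | .add T R => .add (Ty.subst k V T) (Ty.subst k V R)
    | .zero => .zero
end

/-- Iterated substitution `U[V⃗/X⃗]` for a unit type under `|Vs|` quantifiers. -/
def UTy.msubst (Vs : List UTy) (U : UTy) : UTy := Vs.foldl (fun A V => UTy.subst 0 V A) U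

/-- Iterated substitution `T[V⃗/X⃗]` for a type under `|Vs|` quantifiers. -/
def Ty.msubst (Vs : List UTy) (T : Ty) : Ty := Vs.foldl (fun A V => Ty.subst 0 V A) T

mutual
  /-- Substitution of the free type variable `X` (seen at depth `c`) by `V` in a unit type. -/
  def UTy.replAux (X : ℕ) (V : UTy) (c : ℕ) : UTy → UTy
    | .var n => if n = X + c then UTy.shift c 0 V else .var n
    | .arrow U T => .arrow (UTy.replAux X V c U) (Ty.replAux X V c T)
    | .all U => .all (UTy.replAux X V (c + 1) U)

  /-- Substitution of the free type variable `X` (seen at depth `c`) by `V` in a type. -/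
  def Ty.replAux (X : ℕ) (V : UTy) (c : ℕ) : Ty → Ty
    | .unit U => .unit (UTy.replAux X V c U)
    | .add T R => .add (Ty.replAux X V c T) (Ty.replAux X V c R)
    | .zero => .zero
end

/-- Capture-avoiding substitution `U[V/X]` of a free type variable. -/
def UTy.repl (X : ℕ) (V : UTy) (U : UTy) : UTy := UTy.replAux X V 0 U

/-- Capture-avoiding substitution `T[V/X]` of a free type variable. -/
def Ty.repl (X : ℕ) (V : UTy) (T : Ty) : Ty := Ty.replAux X V 0 T

mutual
  /-- Abstraction of the free type variable `X` (at depth `c`), used to form `∀X.U`. -/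
  def UTy.absAux (X c : ℕ) : UTy → UTy
    | .var n => if n = X + c then .var c else if c ≤ n then .var (n + 1) else .var n
    | .arrow U T => .arrow (UTy.absAux X c U) (Ty.absAux X c T)
    | .all U => .all (UTy.absAux X (c + 1) U)

  /-- Abstraction of the free type variable `X` (at depth `c`) in a type. -/
  def Ty.absAux (X c : ℕ) : Ty → Ty
    | .unit U => .unit (UTy.absAux X c U)
    | .add T R => .add (Ty.absAux X c T) (Ty.absAux X c R)
    | .zero => .zero
end

/-- `∀X.U`: universal quantification of the free type variable `X` in `U`. -/
def UTy.genAll (X : ℕ) (U : UTy) : UTy := .all (UTy.absAux X 0 U)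

mutual
  /-- `X` occurs free in a unit type. -/
  def UTy.Free (n : ℕ) : UTy → Prop
    | .var m => m = n
    | .arrow U T => UTy.Free n U ∨ Ty.Free n T
    | .all U => UTy.Free (n + 1) U

  /-- `X` occurs free in a type. -/
  def Ty.Free (n : ℕ) : Ty → Prop
    | .unit U => UTy.Free n U
    | .add T R => Ty.Free n T ∨ Ty.Free n R
    | .zero => False
end

mutual
  /-- Equivalence of unit types (the least congruence making `+` on types
  associative, commutative, with neutral element `𝟘`). -/
  inductive UEq : UTy → UTy → Prop
    | refl (U : UTy) : UEq U U
    | symm : UEq U V → UEq V U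
    | trans : UEq U V → UEq V W → UEq U W
    | arrow : UEq U U' → TEq T T' → UEq (.arrow U T) (.arrow U' T')
    | all : UEq U U' → UEq (.all U) (.all U')

  /-- Equivalence of types: the least congruence such that
  `T+R ≡ R+T`, `T+(R+S) ≡ (T+R)+S` and `T+𝟘 ≡ T`. -/
  inductive TEq : Ty → Ty → Prop
    | refl (T : Ty) : TEq T T
    | symm : TEq T R → TEq R T
    | trans : TEq T R → TEq R S → TEq T S
    | unit : UEq U U' → TEq (.unit U) (.unit U')
    | addCongr : TEq T T' → TEq R R' → TEq (.add T R) (.add T' R')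
    | comm (T R : Ty) : TEq (.add T R) (.add R T)
    | assoc (T R S : Ty) : TEq (.add T (.add R S)) (.add (.add T R) S)
    | zero (T : Ty) : TEq (.add T .zero) T
end

/-- `Σ_{i} T_i`, with the empty sum being `𝟘`. -/
def sumT (Ts : List Ty) : Ty := Ts.foldl Ty.add Ty.zero

/-- `∀X₁.…∀X_k.U`. -/
def allN : ℕ → UTy → UTy
  | 0, U => U
  | k + 1, U => .all (allN k U)

/-- Lifting of type variables in a typing context (for ∀-introduction). -/
def liftCtx (Γ : List UTy) : List UTy := Γ.map (UTy.shift 1 0)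

/-! ## The Add type system -/

/-- Typing judgements of the Add type system. -/
inductive Typing : List UTy → Tm → Ty → Prop
  | ax {Γ : List UTy} {n : ℕ} {U : UTy} : Γ[n]? = some U → Typing Γ (.var n) (.unit U)
  | axZero {Γ : List UTy} : Typing Γ .zero .zero
  | equiv {Γ t T R} : Typing Γ t T → TEq T R → Typing Γ t R
  | arrI {Γ U t T} : Typing (U :: Γ) t T → Typing Γ (.lam t) (.unit (.arrow U T))
  | arrE {Γ t u} {k : ℕ} {U : UTy} {Ts : List Ty} {Vs : List (List UTy)} :
      Ts ≠ [] → Vs ≠ [] → (∀ V ∈ Vs, V.length = k) →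
      Typing Γ t (sumT (Ts.map fun Ti => .unit (allN k (.arrow U Ti)))) →
      Typing Γ u (sumT (Vs.map fun Vj => .unit (UTy.msubst Vj U))) →
      Typing Γ (.app t u)
        (sumT ((Ts.map fun Ti => Vs.map fun Vj => Ty.msubst Vj Ti).flatten))
  | addI {Γ t u T R} : Typing Γ t T → Typing Γ u R → Typing Γ (.add t u) (.add T R)
  | allE {Γ t U} (V : UTy) : Typing Γ t (.unit (.all U)) → Typing Γ t (.unit (UTy.subst 0 V U))
  | allI {Γ t U} : Typing (liftCtx Γ) t (.unit U) → Typing Γ t (.unit (.all U))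

/-! ## Interpretation of types by reducibility candidates -/

/-- Extension of a valuation. -/
def consV (A : Set Tm) (ρ : ℕ → Set Tm) : ℕ → Set Tm
  | 0 => A
  | n + 1 => ρ n

mutual
  /-- Interpretation of unit types. -/
  def interpU : UTy → (ℕ → Set Tm) → Set Tm
    | .var n, ρ => ρ n
    | .arrow U T, ρ => CArrow (interpU U ρ) (interpT T ρ)
    | .all U, ρ => {t | ∀ A : Set Tm, IsCandidate A → t ∈ interpU U (consV A ρ)}

  /-- Interpretation of types. -/
  def interpT : Ty → (ℕ → Set Tm) → Set Tm
    | .unit U, ρ => interpU U ρ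
    | .add T R, ρ => CPlus (interpT T ρ) (interpT R ρ)
    | .zero, _ => clo ∅
end

/-- Lifting of a simultaneous substitution under a binder. -/
def liftSub (σ : ℕ → Tm) : ℕ → Tm
  | 0 => .var 0
  | n + 1 => Tm.shift 1 0 (σ n)

/-- Simultaneous substitution `t_σ` of all free term variables of `t`. -/
def Tm.msubst (σ : ℕ → Tm) : Tm → Tm
  | .var n => σ n
  | .lam t => .lam (Tm.msubst (liftSub σ) t)
  | .app t u => .app (Tm.msubst σ t) (Tm.msubst σ u)
  | .add t u => .add (Tm.msubst σ t) (Tm.msubst σ u)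
  | .zero => .zero

/-! ## The relations ⋖ and ≼ on types -/

/-- The relation `⋖` on unit types: `U₁ ⋖ U₂` iff either `U₂ ≡ ∀X.U₁`, or
`U₁ ≡ ∀X.U'` and `U₂ ≡ U'[V/X]`. -/
inductive SSub : UTy → UTy → Prop
  | gen {U₁ U₂ : UTy} (X : ℕ) : UEq U₂ (UTy.genAll X U₁) → SSub U₁ U₂
  | inst {U₁ U₂ : UTy} (U' V : UTy) : UEq U₁ (.all U') → UEq U₂ (UTy.subst 0 V U') →
      SSub U₁ U₂

/-- The relation `≼`: the reflexive (with respect to `≡`) and transitive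
closure of `⋖`, on types. -/
inductive TPre : Ty → Ty → Prop
  | ofEq : TEq T T' → TPre T T'
  | ofSSub {U V : UTy} : SSub U V → TPre (.unit U) (.unit V)
  | trans : TPre T T' → TPre T' T'' → TPre T T''

/-! ## Trees and the structured type system Add_struct -/

/-- Binary trees with two kinds of leaves: `ℓ`-leaves and `𝟘`-leaves. -/
inductive ATree : Type
  | leaf : ATree
  | zleaf : ATree
  | node : ATree → ATree → ATree
  deriving DecidableEq

namespace ATree

/-- ATree composition: branch a copy of `A'` at each `ℓ`-leaf of `A`. -/
def comp : ATree → ATree → ATree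
  | .leaf, A' => A'
  | .zleaf, _ => .zleaf
  | .node A B, A' => .node (comp A A') (comp B A')

/-- `LeafAt A w`: the word `w` (over `{l,r}`, here `{false,true}`) is the
address of an `ℓ`-leaf of `A`. -/
inductive LeafAt : ATree → List Bool → Prop
  | leaf : LeafAt .leaf []
  | left {A B w} : LeafAt A w → LeafAt (.node A B) (false :: w)
  | right {A B w} : LeafAt B w → LeafAt (.node A B) (true :: w)

/-- Labelling of the `ℓ`-leaves of a tree by unit types, yielding a type. -/
def labelU : ATree → (List Bool → UTy) → Ty
  | .leaf, f => .unit (f [])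
  | .zleaf, _ => .zero
  | .node A B, f => .add (labelU A fun w => f (false :: w)) (labelU B fun w => f (true :: w))

/-- Labelling of the `ℓ`-leaves of a tree by types, yielding a type. -/
def labelT : ATree → (List Bool → Ty) → Ty
  | .leaf, f => f []
  | .zleaf, _ => .zero
  | .node A B, f => .add (labelT A fun w => f (false :: w)) (labelT B fun w => f (true :: w))

/-- Split an address of a leaf of `A ∘ A'` into the `A`-part and the `A'`-part. -/
def split : ATree → List Bool → List Bool × List Bool
  | .leaf, p => ([], p)
  | .zleaf, p => ([], p)
  | .node A _, false :: p => ((split A p).1.cons false, (split A p).2)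
  | .node _ B, true :: p => ((split B p).1.cons true, (split B p).2)
  | .node _ _, [] => ([], [])

end ATree

/-- Typing derivations of the structured type system Add_struct. -/
inductive SDeriv : List UTy → Tm → Ty → Type
  | ax (Γ : List UTy) (n : ℕ) (U : UTy) (h : Γ[n]? = some U) : SDeriv Γ (.var n) (.unit U)
  | axZero (Γ : List UTy) : SDeriv Γ .zero .zero
  | arrI {Γ U t T} (D : SDeriv (U :: Γ) t T) : SDeriv Γ (.lam t) (.unit (.arrow U T))
  | addI {Γ t u T R} (D₁ : SDeriv Γ t T) (D₂ : SDeriv Γ u R) :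
      SDeriv Γ (.add t u) (.add T R)
  | allE {Γ t U} (V : UTy) (D : SDeriv Γ t (.unit (.all U))) :
      SDeriv Γ t (.unit (UTy.subst 0 V U))
  | allI {Γ t U} (D : SDeriv (liftCtx Γ) t (.unit U)) : SDeriv Γ t (.unit (.all U))
  | arrE {Γ t u} (A A' : ATree) (k : ℕ) (U : UTy) (Tf : List Bool → Ty)
      (Vf : List Bool → List UTy)
      (hlen : ∀ v, A'.LeafAt v → (Vf v).length = k)
      (D₁ : SDeriv Γ t (A.labelU fun w => allN k (.arrow U (Tf w))))
      (D₂ : SDeriv Γ u (A'.labelU fun v => UTy.msubst (Vf v) U)) :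
      SDeriv Γ (.app t u)
        ((A.comp A').labelT fun p => Ty.msubst (Vf (A.split p).2) (Tf (A.split p).1))

/-! ## System F with pairs -/

/-- Terms of System F with pairs. -/
inductive FTm : Type
  | var : ℕ → FTm
  | lam : FTm → FTm
  | app : FTm → FTm → FTm
  | star : FTm
  | pair : FTm → FTm → FTm
  | pl : FTm → FTm
  | pr : FTm → FTm
  deriving DecidableEq

/-- Types of System F with pairs. -/
inductive FTy : Type
  | var : ℕ → FTy
  | arrow : FTy → FTy → FTy
  | all : FTy → FTy
  | one : FTy
  | prod : FTy → FTy → FTy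
  deriving DecidableEq

/-- Shifting of term variables in F-terms. -/
def FTm.shift (d c : ℕ) : FTm → FTm
  | .var n => if n < c then .var n else .var (n + d)
  | .lam t => .lam (FTm.shift d (c + 1) t)
  | .app t u => .app (FTm.shift d c t) (FTm.shift d c u)
  | .star => .star
  | .pair t u => .pair (FTm.shift d c t) (FTm.shift d c u)
  | .pl t => .pl (FTm.shift d c t)
  | .pr t => .pr (FTm.shift d c t)

/-- Substitution of the term variable `k` by `v` in an F-term. -/
def FTm.subst (k : ℕ) (v : FTm) : FTm → FTm
  | .var n => if n = k then FTm.shift k 0 v else if k < n then .var (n - 1) else .var n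
  | .lam t => .lam (FTm.subst (k + 1) v t)
  | .app t u => .app (FTm.subst k v t) (FTm.subst k v u)
  | .star => .star
  | .pair t u => .pair (FTm.subst k v t) (FTm.subst k v u)
  | .pl t => .pl (FTm.subst k v t)
  | .pr t => .pr (FTm.subst k v t)

/-- Shifting of type variables in F-types. -/
def FTy.shift (d c : ℕ) : FTy → FTy
  | .var n => if n < c then .var n else .var (n + d)
  | .arrow A B => .arrow (FTy.shift d c A) (FTy.shift d c B)
  | .all A => .all (FTy.shift d (c + 1) A)
  | .one => .one
  | .prod A B => .prod (FTy.shift d c A) (FTy.shift d c B)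

/-- Substitution of the type variable `k` by `B` in an F-type. -/
def FTy.subst (k : ℕ) (B : FTy) : FTy → FTy
  | .var n => if n = k then FTy.shift k 0 B else if k < n then .var (n - 1) else .var n
  | .arrow A A' => .arrow (FTy.subst k B A) (FTy.subst k B A')
  | .all A => .all (FTy.subst (k + 1) B A)
  | .one => .one
  | .prod A A' => .prod (FTy.subst k B A) (FTy.subst k B A')

/-- One-step reduction in System F with pairs. -/
inductive FStep : FTm → FTm → Prop
  | beta (t u : FTm) : FStep (.app (.lam t) u) (FTm.subst 0 u t)
  | plPair (t u : FTm) : FStep (.pl (.pair t u)) t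
  | prPair (t u : FTm) : FStep (.pr (.pair t u)) u
  | eta (t : FTm) : FStep (.lam (.app (FTm.shift 1 0 t) (.var 0))) t
  | sp (p : FTm) : FStep (.pair (.pl p) (.pr p)) p
  | lamCongr : FStep t t' → FStep (.lam t) (.lam t')
  | appLeft : FStep t t' → FStep (.app t u) (.app t' u)
  | appRight : FStep u u' → FStep (.app t u) (.app t u')
  | pairLeft : FStep t t' → FStep (.pair t u) (.pair t' u)
  | pairRight : FStep u u' → FStep (.pair t u) (.pair t u')
  | plCongr : FStep t t' → FStep (.pl t) (.pl t')
  | prCongr : FStep t t' → FStep (.pr t) (.pr t')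

/-- Typing in System F with pairs. -/
inductive FTyping : List FTy → FTm → FTy → Prop
  | ax {Γ n A} : Γ[n]? = some A → FTyping Γ (.var n) A
  | star {Γ} : FTyping Γ .star .one
  | lam {Γ A t B} : FTyping (A :: Γ) t B → FTyping Γ (.lam t) (.arrow A B)
  | app {Γ t u A B} : FTyping Γ t (.arrow A B) → FTyping Γ u A → FTyping Γ (.app t u) B
  | pair {Γ t u A B} : FTyping Γ t A → FTyping Γ u B → FTyping Γ (.pair t u) (.prod A B)
  | pl {Γ t A B} : FTyping Γ t (.prod A B) → FTyping Γ (.pl t) A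
  | pr {Γ t A B} : FTyping Γ t (.prod A B) → FTyping Γ (.pr t) B
  | allI {Γ t A} : FTyping (Γ.map (FTy.shift 1 0)) t A → FTyping Γ t (.all A)
  | allE {Γ t A} (B : FTy) : FTyping Γ t (.all A) → FTyping Γ t (FTy.subst 0 B A)

/-! ## The translation from Add_struct into System F with pairs -/

mutual
  /-- Translation of unit types into F-types. -/
  def transU : UTy → FTy
    | .var n => .var n
    | .arrow U T => .arrow (transU U) (transT T)
    | .all U => .all (transU U)

  /-- Translation of Add types into F-types. -/
  def transT : Ty → FTy
    | .unit U => transU U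
    | .add T R => .prod (transT T) (transT R)
    | .zero => .one
end

/-- Labelling of the `ℓ`-leaves of a tree by F-terms (pairs at the nodes, `⋆`
at the `𝟘`-leaves), yielding an F-term. -/
def ATree.labelF : ATree → (List Bool → FTm) → FTm
  | .leaf, f => f []
  | .zleaf, _ => .star
  | .node A B, f => .pair (ATree.labelF A fun w => f (false :: w))
      (ATree.labelF B fun w => f (true :: w))

/-- `π_{w̄}(t)`: the composite of projections along the mirror of the word `w`. -/
def projMirror (w : List Bool) (t : FTm) : FTm :=
  w.foldl (fun s b => if b then .pr s else .pl s) t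

/-- The translation `|t|_D` of a term typed in Add_struct by a derivation `D`
into an F-term. -/
def transD : ∀ {Γ : List UTy} {t : Tm} {T : Ty}, SDeriv Γ t T → FTm
  | _, _, _, .ax _ n _ _ => .var n
  | _, _, _, .axZero _ => .star
  | _, _, _, .arrI D => .lam (transD D)
  | _, _, _, .addI D₁ D₂ => .pair (transD D₁) (transD D₂)
  | _, _, _, .allE _ D => transD D
  | _, _, _, .allI D => transD D
  | _, _, _, .arrE A A' _ _ _ _ _ D₁ D₂ =>
      (A.comp A').labelF fun p =>
        .app (projMirror (A.split p).1 (transD D₁)) (projMirror (A.split p).2 (transD D₂))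

/-! ## Structural reduction (without AC and without the rule `t+𝟎 → t`) -/

/-- One-step reduction by a rule other than `t+𝟎 → t` (and not using the
AC-equivalence, which is absent from Add_struct). -/
inductive SStep : Tm → Tm → Prop
  | distrRight (t u s : Tm) : SStep (.app (.add t u) s) (.add (.app t s) (.app u s))
  | distrLeft (t u s : Tm) : SStep (.app t (.add u s)) (.add (.app t u) (.app t s))
  | zeroApp (t : Tm) : SStep (.app .zero t) .zero
  | appZero (t : Tm) : SStep (.app t .zero) .zero
  | beta (t v : Tm) : IsValue v → SStep (.app (.lam t) v) (Tm.subst 0 v t)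
  | appLeft : SStep t t' → SStep (.app t u) (.app t' u)
  | appRight : SStep u u' → SStep (.app t u) (.app t u')
  | addLeft : SStep t t' → SStep (.add t u) (.add t' u)
  | addRight : SStep u u' → SStep (.add t u) (.add t u')
  | lamCongr : SStep t t' → SStep (.lam t) (.lam t')

/-! ## The partial inverse translation -/

/-- Partial inverse translation on types. -/
def invTy : FTy → Option Ty
  | .var n => some (.unit (.var n))
  | .one => some .zero
  | .all A =>
    match invTy A with
    | some (.unit U) => some (.unit (.all U))
    | _ => none
  | .prod A B =>
    match invTy A, invTy B with
    | some T, some R => some (.add T R)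
    | _, _ => none
  | .arrow A B =>
    match invTy A, invTy B with
    | some (.unit U), some T => some (.unit (.arrow U T))
    | _, _ => none

/-- An F-term of the shape `A[wv ↦ π_{w̄}(t) π_{v̄}(u)]` for a non-trivial tree. -/
def IsTreeApp (s : FTm) : Prop :=
  ∃ (A A' : ATree) (t u : FTm), A.comp A' ≠ .leaf ∧ A.comp A' ≠ .zleaf ∧
    s = (A.comp A').labelF fun p =>
      .app (projMirror (A.split p).1 t) (projMirror (A.split p).2 u)

/-- The partial inverse translation on F-terms, as a relation. -/
inductive InvTm : FTm → Tm → Prop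
  | var (n : ℕ) : InvTm (.var n) (.var n)
  | star : InvTm .star .zero
  | lam : InvTm t t' → InvTm (.lam t) (.lam t')
  | app : InvTm t t' → InvTm u u' → InvTm (.app t u) (.app t' u')
  | treeApp (A A' : ATree) {t u : FTm} {t' u' : Tm} :
      A.comp A' ≠ .leaf → A.comp A' ≠ .zleaf → InvTm t t' → InvTm u u' →
      InvTm ((A.comp A').labelF fun p =>
          .app (projMirror (A.split p).1 t) (projMirror (A.split p).2 u))
        (.app t' u')
  | pair : ¬ IsTreeApp (.pair t u) → InvTm t t' → InvTm u u' →
      InvTm (.pair t u) (.add t' u')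

/-!
Induction on the derivation of `Γ ⊢ t u : T`. An `→E` step provides the witnesses, and an `≡` or
`∀E` step only prolongs the chain `≼`. In a `∀I` step the premise lives in the lifted context, where
the de Bruijn index `0` is the generalised variable and does not occur in `Γ`. Substituting a
variable `N` for it brings the witnesses back to `Γ`, since typing and (for `N` large enough that it
clashes with no name generalised by `⋖`) also `≼` are stable under substitution. Finally
`U[N/0] ⋖ ∀U` by generalising `N` again, which needs `N` fresh for `U`.
-/

mutual
theorem UTy.shift_zero : ∀ (A : UTy) (c : ℕ), UTy.shift 0 c A = A
  | .var n, c => by simp [UTy.shift]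
  | .arrow U T, c => by simp [UTy.shift, UTy.shift_zero U, Ty.shift_zero T]
  | .all U, c => by simp [UTy.shift, UTy.shift_zero U]
theorem Ty.shift_zero : ∀ (A : Ty) (c : ℕ), Ty.shift 0 c A = A
  | .unit U, c => by simp [Ty.shift, UTy.shift_zero U]
  | .add T R, c => by simp [Ty.shift, Ty.shift_zero T, Ty.shift_zero R]
  | .zero, c => by simp [Ty.shift]
end

mutual
theorem UTy.shift_shift : ∀ (A : UTy) (b j e f : ℕ), f ≤ e → e ≤ f + j →
    UTy.shift b e (UTy.shift j f A) = UTy.shift (b + j) f A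
  | .var n, b, j, e, f, h1, h2 => by grind [UTy.shift]
  | .arrow U T, b, j, e, f, h1, h2 => by
      simp [UTy.shift, UTy.shift_shift U b j e f h1 h2, Ty.shift_shift T b j e f h1 h2]
  | .all U, b, j, e, f, h1, h2 => by
      simp [UTy.shift, UTy.shift_shift U b j (e + 1) (f + 1) (by omega) (by omega)]
theorem Ty.shift_shift : ∀ (A : Ty) (b j e f : ℕ), f ≤ e → e ≤ f + j →
    Ty.shift b e (Ty.shift j f A) = Ty.shift (b + j) f A
  | .unit U, b, j, e, f, h1, h2 => by simp [Ty.shift, UTy.shift_shift U b j e f h1 h2]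
  | .add T R, b, j, e, f, h1, h2 => by
      simp [Ty.shift, Ty.shift_shift T b j e f h1 h2, Ty.shift_shift R b j e f h1 h2]
  | .zero, _, _, _, _, _, _ => by simp [Ty.shift]
end

mutual
theorem UTy.subst_shift_cancel : ∀ (A W : UTy) (d e k : ℕ), e ≤ k → k < e + (d + 1) →
    UTy.subst k W (UTy.shift (d + 1) e A) = UTy.shift d e A
  | .var n, W, d, e, k, h1, h2 => by grind [UTy.shift, UTy.subst]
  | .arrow U T, W, d, e, k, h1, h2 => by
      simp [UTy.shift, UTy.subst, UTy.subst_shift_cancel U W d e k h1 h2,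
        Ty.subst_shift_cancel T W d e k h1 h2]
  | .all U, W, d, e, k, h1, h2 => by
      simp [UTy.shift, UTy.subst,
        UTy.subst_shift_cancel U W d (e + 1) (k + 1) (by omega) (by omega)]
theorem Ty.subst_shift_cancel :
    ∀ (A : Ty) (W : UTy) (d e k : ℕ), e ≤ k → k < e + (d + 1) →
    Ty.subst k W (Ty.shift (d + 1) e A) = Ty.shift d e A
  | .unit U, W, d, e, k, h1, h2 => by
      simp [Ty.shift, Ty.subst, UTy.subst_shift_cancel U W d e k h1 h2]
  | .add T R, W, d, e, k, h1, h2 => by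
      simp [Ty.shift, Ty.subst, Ty.subst_shift_cancel T W d e k h1 h2,
        Ty.subst_shift_cancel R W d e k h1 h2]
  | .zero, _, _, _, _, _, _ => by simp [Ty.shift, Ty.subst]
end

mutual
theorem UTy.subst_shift : ∀ (A W : UTy) (b e j : ℕ), e ≤ j →
    UTy.subst (j + b) W (UTy.shift b e A) = UTy.shift b e (UTy.subst j W A)
  | .var n, W, b, e, j, h1 => by
      have := UTy.shift_shift W b j e 0 (by omega) (by omega)
      grind [UTy.shift, UTy.subst]
  | .arrow U T, W, b, e, j, h1 => by
      simp [UTy.shift, UTy.subst, UTy.subst_shift U W b e j h1, Ty.subst_shift T W b e j h1]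
  | .all U, W, b, e, j, h1 => by
      have := UTy.subst_shift U W b (e + 1) (j + 1) (by omega)
      simp only [UTy.shift, UTy.subst]
      rw [show j + b + 1 = (j + 1) + b by omega, this]
theorem Ty.subst_shift : ∀ (A : Ty) (W : UTy) (b e j : ℕ), e ≤ j →
    Ty.subst (j + b) W (Ty.shift b e A) = Ty.shift b e (Ty.subst j W A)
  | .unit U, W, b, e, j, h1 => by simp [Ty.shift, Ty.subst, UTy.subst_shift U W b e j h1]
  | .add T R, W, b, e, j, h1 => by
      simp [Ty.shift, Ty.subst, Ty.subst_shift T W b e j h1, Ty.subst_shift R W b e j h1]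
  | .zero, _, _, _, _, _ => by simp [Ty.shift, Ty.subst]
end

mutual
theorem UTy.subst_subst : ∀ (A : UTy) (V W : UTy) (b j : ℕ),
    UTy.subst (b + j) W (UTy.subst b V A) =
      UTy.subst b (UTy.subst j W V) (UTy.subst (b + j + 1) W A)
  | .var n, V, W, b, j => by
      have h1 := UTy.subst_shift V W b 0 j (by omega)
      have h2 := UTy.subst_shift_cancel W (UTy.subst j W V) (b + j) 0 b (by omega) (by omega)
      grind [UTy.subst]
  | .arrow U T, V, W, b, j => by
      simp [UTy.subst, UTy.subst_subst U V W b j, Ty.subst_subst T V W b j]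
  | .all U, V, W, b, j => by
      have := UTy.subst_subst U V W (b + 1) j
      simp only [UTy.subst]
      rw [show b + j + 1 = (b + 1) + j by omega, this]
theorem Ty.subst_subst : ∀ (A : Ty) (V W : UTy) (b j : ℕ),
    Ty.subst (b + j) W (Ty.subst b V A) =
      Ty.subst b (UTy.subst j W V) (Ty.subst (b + j + 1) W A)
  | .unit U, V, W, b, j => by simp [Ty.subst, UTy.subst_subst U V W b j]
  | .add T R, V, W, b, j => by
      simp [Ty.subst, Ty.subst_subst T V W b j, Ty.subst_subst R V W b j]
  | .zero, _, _, _, _ => by simp [Ty.subst]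
end

mutual
theorem UEq.subst {U V : UTy} :
    UEq U V → ∀ (k : ℕ) (W : UTy), UEq (UTy.subst k W U) (UTy.subst k W V)
  | .refl _, _, _ => .refl _
  | .symm h, k, W => (h.subst k W).symm
  | .trans h h', k, W => (h.subst k W).trans (h'.subst k W)
  | .arrow h h', k, W => .arrow (h.subst k W) (h'.subst k W)
  | .all h, k, W => .all (h.subst (k + 1) W)
theorem TEq.subst {T R : Ty} :
    TEq T R → ∀ (k : ℕ) (W : UTy), TEq (Ty.subst k W T) (Ty.subst k W R)
  | .refl _, _, _ => .refl _
  | .symm h, k, W => (h.subst k W).symm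
  | .trans h h', k, W => (h.subst k W).trans (h'.subst k W)
  | .unit h, k, W => .unit (h.subst k W)
  | .addCongr h h', k, W => .addCongr (h.subst k W) (h'.subst k W)
  | .comm _ _, _, _ => .comm _ _
  | .assoc _ _ _, _, _ => .assoc _ _ _
  | .zero _, _, _ => .zero _
end

theorem Ty.subst_sumT (k : ℕ) (V : UTy) (l : List Ty) :
    Ty.subst k V (sumT l) = sumT (l.map (Ty.subst k V)) := by
  rw [sumT, sumT, List.foldl_map]
  exact (List.foldl_hom (Ty.subst k V) (fun _ _ => rfl)).symm

theorem UTy.subst_allN (V : UTy) : ∀ (q k : ℕ) (A : UTy),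
    UTy.subst k V (allN q A) = allN q (UTy.subst (k + q) V A)
  | 0, k, A => rfl
  | q + 1, k, A => by
      rw [allN, UTy.subst, UTy.subst_allN V q (k + 1) A, allN, Nat.add_right_comm, Nat.add_assoc]

/-- In `UTy.msubst Vs U` the head of `Vs` is substituted first and still lies under the binders
that the rest of `Vs` instantiates, hence the offset `Vs.length`. -/
def substList (k : ℕ) (W : UTy) : List UTy → List UTy
  | [] => []
  | V :: Vs => UTy.subst (k + Vs.length) W V :: substList k W Vs

@[simp] theorem length_substList (k : ℕ) (W : UTy) :
    ∀ Vs : List UTy, (substList k W Vs).length = Vs.length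
  | [] => rfl
  | _ :: Vs => congrArg Nat.succ (length_substList k W Vs)

theorem UTy.subst_msubst (k : ℕ) (W : UTy) : ∀ (Vs : List UTy) (U : UTy),
    UTy.subst k W (UTy.msubst Vs U)
      = UTy.msubst (substList k W Vs) (UTy.subst (k + Vs.length) W U)
  | [], U => rfl
  | V :: Vs, U => by
      have := UTy.subst_subst U V W 0 (k + Vs.length)
      rw [Nat.zero_add] at this
      exact (UTy.subst_msubst k W Vs _).trans (congrArg _ this)

theorem Ty.subst_msubst (k : ℕ) (W : UTy) : ∀ (Vs : List UTy) (T : Ty),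
    Ty.subst k W (Ty.msubst Vs T)
      = Ty.msubst (substList k W Vs) (Ty.subst (k + Vs.length) W T)
  | [], T => rfl
  | V :: Vs, T => by
      have := Ty.subst_subst T V W 0 (k + Vs.length)
      rw [Nat.zero_add] at this
      exact (Ty.subst_msubst k W Vs _).trans (congrArg _ this)

def arrowSum (k : ℕ) (U : UTy) (Ts : List Ty) : Ty :=
  sumT (Ts.map fun Ti => .unit (allN k (.arrow U Ti)))

def instSum (U : UTy) (Vs : List (List UTy)) : Ty :=
  sumT (Vs.map fun Vj => .unit (UTy.msubst Vj U))

def resultSum (Ts : List Ty) (Vs : List (List UTy)) : Ty :=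
  sumT ((Ts.map fun Ti => Vs.map fun Vj => Ty.msubst Vj Ti).flatten)

section SubstSums

variable (k q : ℕ) (V : UTy)

theorem Ty.subst_arrowSum (U : UTy) (Ts : List Ty) :
    Ty.subst k V (arrowSum q U Ts)
      = arrowSum q (UTy.subst (k + q) V U) (Ts.map (Ty.subst (k + q) V)) := by
  simp only [arrowSum, Ty.subst_sumT, List.map_map]
  congr 1
  exact List.map_congr_left fun Ti _ => by simp [Ty.subst, UTy.subst_allN, UTy.subst]

theorem Ty.subst_instSum {Vs : List (List UTy)} (hlen : ∀ Vj ∈ Vs, Vj.length = q) (U : UTy) :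
    Ty.subst k V (instSum U Vs) = instSum (UTy.subst (k + q) V U) (Vs.map (substList k V)) := by
  simp only [instSum, Ty.subst_sumT, List.map_map]
  congr 1
  exact List.map_congr_left fun Vj hVj => by simp [Ty.subst, UTy.subst_msubst, hlen Vj hVj]

theorem Ty.subst_resultSum {Vs : List (List UTy)} (hlen : ∀ Vj ∈ Vs, Vj.length = q)
    (Ts : List Ty) :
    Ty.subst k V (resultSum Ts Vs)
      = resultSum (Ts.map (Ty.subst (k + q) V)) (Vs.map (substList k V)) := by
  simp only [resultSum, Ty.subst_sumT, List.map_flatten, List.map_map]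
  congr 2
  exact List.map_congr_left fun Ti _ => by
    simpa using List.map_congr_left fun Vj hVj => by simp [Ty.subst_msubst, hlen Vj hVj]

end SubstSums

theorem forall_length_map_substList {k q : ℕ} {V : UTy} {Vs : List (List UTy)}
    (hlen : ∀ Vj ∈ Vs, Vj.length = q) : ∀ Vj ∈ Vs.map (substList k V), Vj.length = q := by
  simpa using hlen

theorem liftCtx_map_subst_zero (Γ : List UTy) (V : UTy) :
    (liftCtx Γ).map (UTy.subst 0 V) = Γ := by
  rw [liftCtx, List.map_map]
  exact List.map_id'' (fun W => by
    simpa [UTy.shift_zero] using UTy.subst_shift_cancel W V 0 0 0 le_rfl (by omega)) Γ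

theorem liftCtx_map_subst_succ (Γ : List UTy) (k : ℕ) (V : UTy) :
    (liftCtx Γ).map (UTy.subst (k + 1) V) = liftCtx (Γ.map (UTy.subst k V)) := by
  simp only [liftCtx, List.map_map]
  exact List.map_congr_left fun W _ => UTy.subst_shift W V 1 0 k k.zero_le

theorem Typing.subst {Γ : List UTy} {s : Tm} {T : Ty} (h : Typing Γ s T) (k : ℕ) (V : UTy) :
    Typing (Γ.map (UTy.subst k V)) s (Ty.subst k V T) := by
  induction h generalizing k with
  | ax hget => exact .ax (by simp [hget])
  | axZero => exact .axZero
  | equiv _ hEq ih => exact (ih k).equiv (hEq.subst k V)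
  | arrI _ ih => exact .arrI (ih k)
  | @arrE Γ t u q U Ts Vs hTs hVs hlen _ _ ih₁ ih₂ =>
      have ht : Typing _ t (Ty.subst k V (arrowSum q U Ts)) := ih₁ k
      have hu : Typing _ u (Ty.subst k V (instSum U Vs)) := ih₂ k
      rw [Ty.subst_arrowSum] at ht
      rw [Ty.subst_instSum k q V hlen] at hu
      show Typing _ _ (Ty.subst k V (resultSum Ts Vs))
      rw [Ty.subst_resultSum k q V hlen]
      exact .arrE (by simpa using hTs) (by simpa using hVs) (forall_length_map_substList hlen)
        ht hu
  | addI _ _ ih₁ ih₂ => exact .addI (ih₁ k) (ih₂ k)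
  | @allE Γ t U W _ ih =>
      have := UTy.subst_subst U W V 0 k
      rw [Nat.zero_add] at this
      simpa only [Ty.subst, UTy.subst, this] using (ih k).allE (UTy.subst k V W)
  | allI _ ih =>
      have := ih (k + 1)
      rw [liftCtx_map_subst_succ] at this
      exact .allI this

mutual
def UTy.maxIdx : UTy → ℕ
  | .var n => n
  | .arrow U T => max (UTy.maxIdx U) (Ty.maxIdx T)
  | .all U => UTy.maxIdx U
def Ty.maxIdx : Ty → ℕ
  | .unit U => UTy.maxIdx U
  | .add T R => max (Ty.maxIdx T) (Ty.maxIdx R)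
  | .zero => 0
end

mutual
theorem UTy.absAux_of_maxIdx_lt : ∀ (A : UTy) (X c : ℕ), UTy.maxIdx A < X + c →
    UTy.absAux X c A = UTy.shift 1 c A
  | .var n, X, c, h => by
      simp only [UTy.maxIdx] at h
      grind [UTy.absAux, UTy.shift]
  | .arrow U T, X, c, h => by
      simp only [UTy.maxIdx, max_lt_iff] at h
      simp [UTy.absAux, UTy.shift, UTy.absAux_of_maxIdx_lt U X c h.1,
        Ty.absAux_of_maxIdx_lt T X c h.2]
  | .all U, X, c, h => by
      simp only [UTy.maxIdx] at h
      simp [UTy.absAux, UTy.shift, UTy.absAux_of_maxIdx_lt U X (c + 1) (by omega)]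
theorem Ty.absAux_of_maxIdx_lt : ∀ (A : Ty) (X c : ℕ), Ty.maxIdx A < X + c →
    Ty.absAux X c A = Ty.shift 1 c A
  | .unit U, X, c, h => by
      simp only [Ty.maxIdx] at h
      simp [Ty.absAux, Ty.shift, UTy.absAux_of_maxIdx_lt U X c h]
  | .add T R, X, c, h => by
      simp only [Ty.maxIdx, max_lt_iff] at h
      simp [Ty.absAux, Ty.shift, Ty.absAux_of_maxIdx_lt T X c h.1,
        Ty.absAux_of_maxIdx_lt R X c h.2]
  | .zero, _, _, _ => by simp [Ty.absAux, Ty.shift]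
end

mutual
theorem UTy.subst_absAux : ∀ (A : UTy) (X N c : ℕ), X ≤ N → UTy.maxIdx A ≤ N + c →
    UTy.subst (c + 1) (.var N) (UTy.absAux X c A)
      = UTy.absAux (if X = 0 then N else X - 1) c (UTy.subst c (.var N) A)
  | .var n, X, N, c, hX, hA => by
      simp only [UTy.maxIdx] at hA
      grind [UTy.absAux, UTy.subst, UTy.shift]
  | .arrow U T, X, N, c, hX, hA => by
      simp only [UTy.maxIdx, max_le_iff] at hA
      simp [UTy.absAux, UTy.subst, UTy.subst_absAux U X N c hX hA.1,
        Ty.subst_absAux T X N c hX hA.2]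
  | .all U, X, N, c, hX, hA => by
      simp only [UTy.maxIdx] at hA
      simp [UTy.absAux, UTy.subst, UTy.subst_absAux U X N (c + 1) hX (by omega)]
theorem Ty.subst_absAux : ∀ (A : Ty) (X N c : ℕ), X ≤ N → Ty.maxIdx A ≤ N + c →
    Ty.subst (c + 1) (.var N) (Ty.absAux X c A)
      = Ty.absAux (if X = 0 then N else X - 1) c (Ty.subst c (.var N) A)
  | .unit U, X, N, c, hX, hA => by
      simp only [Ty.maxIdx] at hA
      simp [Ty.absAux, Ty.subst, UTy.subst_absAux U X N c hX hA]
  | .add T R, X, N, c, hX, hA => by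
      simp only [Ty.maxIdx, max_le_iff] at hA
      simp [Ty.absAux, Ty.subst, Ty.subst_absAux T X N c hX hA.1,
        Ty.subst_absAux R X N c hX hA.2]
  | .zero, _, _, _, _, _ => by simp [Ty.absAux, Ty.subst]
end

mutual
theorem UTy.absAux_subst_var : ∀ (A : UTy) (N c : ℕ), UTy.maxIdx A ≤ N + c →
    UTy.absAux N c (UTy.subst c (.var N) A) = A
  | .var n, N, c, hA => by
      simp only [UTy.maxIdx] at hA
      grind [UTy.absAux, UTy.subst, UTy.shift]
  | .arrow U T, N, c, hA => by
      simp only [UTy.maxIdx, max_le_iff] at hA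
      simp [UTy.absAux, UTy.subst, UTy.absAux_subst_var U N c hA.1,
        Ty.absAux_subst_var T N c hA.2]
  | .all U, N, c, hA => by
      simp only [UTy.maxIdx] at hA
      simp [UTy.absAux, UTy.subst, UTy.absAux_subst_var U N (c + 1) (by omega)]
theorem Ty.absAux_subst_var : ∀ (A : Ty) (N c : ℕ), Ty.maxIdx A ≤ N + c →
    Ty.absAux N c (Ty.subst c (.var N) A) = A
  | .unit U, N, c, hA => by
      simp only [Ty.maxIdx] at hA
      simp [Ty.absAux, Ty.subst, UTy.absAux_subst_var U N c hA]
  | .add T R, N, c, hA => by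
      simp only [Ty.maxIdx, max_le_iff] at hA
      simp [Ty.absAux, Ty.subst, Ty.absAux_subst_var T N c hA.1,
        Ty.absAux_subst_var R N c hA.2]
  | .zero, _, _, _ => by simp [Ty.absAux, Ty.subst]
end

theorem UTy.genAll_eq_of_maxIdx_lt {U : UTy} {X X' : ℕ} (h : UTy.maxIdx U < X)
    (h' : UTy.maxIdx U < X') : UTy.genAll X U = UTy.genAll X' U := by
  rw [UTy.genAll, UTy.genAll, UTy.absAux_of_maxIdx_lt U X 0 h, UTy.absAux_of_maxIdx_lt U X' 0 h']

theorem UTy.exists_genAll_eq_of_le (U : UTy) (X : ℕ) :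
    ∃ X' ≤ UTy.maxIdx U + 1, UTy.genAll X U = UTy.genAll X' U := by
  by_cases hX : X ≤ UTy.maxIdx U + 1
  · exact ⟨X, hX, rfl⟩
  · exact ⟨_, le_rfl, UTy.genAll_eq_of_maxIdx_lt (by omega) (by omega)⟩

-- `if X = 0 then N else X - 1` is what the name `X` becomes under `UTy.subst 0 (.var N)`.
theorem UTy.subst_genAll {U : UTy} {X N : ℕ} (hX : X ≤ N) (hN : UTy.maxIdx U ≤ N) :
    UTy.subst 0 (.var N) (UTy.genAll X U)
      = UTy.genAll (if X = 0 then N else X - 1) (UTy.subst 0 (.var N) U) :=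
  congrArg UTy.all (UTy.subst_absAux U X N 0 hX hN)

theorem UTy.genAll_subst_var {U : UTy} {N : ℕ} (hN : UTy.maxIdx U ≤ N) :
    UTy.genAll N (UTy.subst 0 (.var N) U) = .all U :=
  congrArg UTy.all (UTy.absAux_subst_var U N 0 hN)

open Filter

theorem SSub.subst_var {U₁ U₂ : UTy} (h : SSub U₁ U₂) :
    ∀ᶠ N in atTop, SSub (UTy.subst 0 (.var N) U₁) (UTy.subst 0 (.var N) U₂) := by
  rcases h with ⟨X, hEq⟩ | ⟨U', V, h₁, h₂⟩
  · obtain ⟨X', hX', hgen⟩ := UTy.exists_genAll_eq_of_le U₁ X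
    filter_upwards [eventually_ge_atTop (UTy.maxIdx U₁ + 1)] with N hN
    refine .gen (if X' = 0 then N else X' - 1) ?_
    rw [← UTy.subst_genAll (by omega) (by omega), ← hgen]
    exact hEq.subst 0 _
  · refine .of_forall fun N => .inst (UTy.subst 1 (.var N) U') (UTy.subst 0 (.var N) V)
      (h₁.subst 0 _) ?_
    have := UTy.subst_subst U' V (.var N) 0 0
    rw [Nat.zero_add] at this
    rw [← this]
    exact h₂.subst 0 _

theorem TPre.subst_var {T R : Ty} (h : TPre T R) :
    ∀ᶠ N in atTop, TPre (Ty.subst 0 (.var N) T) (Ty.subst 0 (.var N) R) := by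
  induction h with
  | ofEq hEq => exact .of_forall fun N => .ofEq (hEq.subst 0 _)
  | ofSSub hS => exact hS.subst_var.mono fun N => .ofSSub
  | trans _ _ ih₁ ih₂ => exact (ih₁.and ih₂).mono fun N h => h.1.trans h.2

def AppGen (Γ : List UTy) (t u : Tm) (T : Ty) : Prop :=
  ∃ (Ts : List Ty) (U : UTy) (k : ℕ) (Vs : List (List UTy)),
    Ts ≠ [] ∧ Vs ≠ [] ∧ (∀ V ∈ Vs, V.length = k) ∧
    Typing Γ t (arrowSum k U Ts) ∧ Typing Γ u (instSum U Vs) ∧ TPre (resultSum Ts Vs) T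

namespace AppGen

variable {Γ : List UTy} {t u : Tm}

theorem of_tpre {T R : Ty} (h : AppGen Γ t u T) (hTR : TPre T R) : AppGen Γ t u R := by
  obtain ⟨Ts, U, k, Vs, hTs, hVs, hlen, ht, hu, hpre⟩ := h
  exact ⟨Ts, U, k, Vs, hTs, hVs, hlen, ht, hu, hpre.trans hTR⟩

theorem subst_var {T : Ty} (h : AppGen Γ t u T) :
    ∀ᶠ N in atTop, AppGen (Γ.map (UTy.subst 0 (.var N))) t u (Ty.subst 0 (.var N) T) := by
  obtain ⟨Ts, U, k, Vs, hTs, hVs, hlen, ht, hu, hpre⟩ := h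
  filter_upwards [hpre.subst_var] with N hN
  have ht' := ht.subst 0 (.var N)
  have hu' := hu.subst 0 (.var N)
  rw [Ty.subst_arrowSum] at ht'
  rw [Ty.subst_instSum 0 k _ hlen] at hu'
  rw [Ty.subst_resultSum 0 k _ hlen] at hN
  exact ⟨_, _, k, _, by simpa using hTs, by simpa using hVs,
    forall_length_map_substList hlen, ht', hu', hN⟩

theorem allI {U : UTy} (h : AppGen (liftCtx Γ) t u (.unit U)) :
    AppGen Γ t u (.unit (.all U)) := by
  obtain ⟨N, hgen, hN⟩ := (h.subst_var.and (eventually_ge_atTop (UTy.maxIdx U))).exists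
  rw [liftCtx_map_subst_zero] at hgen
  refine hgen.of_tpre (.ofSSub (.gen N ?_))
  rw [UTy.genAll_subst_var hN]
  exact .refl _

end AppGen

/-- **Generation lemma for applications** (Lemma 7.1).  If `Γ ⊢ t u : T` then
`Γ ⊢ t : Σᵢ ∀X⃗.(U→Tᵢ)` and `Γ ⊢ u : Σⱼ U[V⃗ⱼ/X⃗]` for some nonempty sums,
with `ΣᵢΣⱼ Tᵢ[V⃗ⱼ/X⃗] ≼ T`. -/
theorem generation_app {Γ : List UTy} {t u : Tm} {T : Ty}
    (h : Typing Γ (.app t u) T) :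
    ∃ (Ts : List Ty) (U : UTy) (k : ℕ) (Vs : List (List UTy)),
      Ts ≠ [] ∧ Vs ≠ [] ∧ (∀ V ∈ Vs, V.length = k) ∧
      Typing Γ t (sumT (Ts.map fun Ti => .unit (allN k (.arrow U Ti)))) ∧
      Typing Γ u (sumT (Vs.map fun Vj => .unit (UTy.msubst Vj U))) ∧
      TPre (sumT ((Ts.map fun Ti => Vs.map fun Vj => Ty.msubst Vj Ti).flatten)) T := by
  suffices AppGen Γ t u T from this
  generalize hs : Tm.app t u = s at h
  induction h with
  | arrE hTs hVs hlen ht hu =>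
      cases hs
      exact ⟨_, _, _, _, hTs, hVs, hlen, ht, hu, .ofEq (.refl _)⟩
  | equiv _ hEq ih => exact (ih hs).of_tpre (.ofEq hEq)
  | allE V _ ih => exact (ih hs).of_tpre (.ofSSub (.inst _ V (.refl _) (.refl _)))
  | allI _ ih => exact (ih hs).allI
  | _ => cases hs
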